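/- Explicit kernel formula: for z \in \mathbb{C}, z^2 \neq q^{2n}, k_z(q^n) = \frac{(1-q)c_{q,v}^2}{1-q^{2v+2}} a^{2v+2} \cdot \frac{q^{2n} j_{v+1}(aq^n,q^2) j_v(aq^{-1}z,q^2) - z^2 j_{v+1}(az,q^2) j_v(aq^{n-1},q^2)}{q^{2n}-z^2}. -/

import Mathlib

noncomputable def qPoch (a q : ℝ) (n : ℕ) : ℝ := ∏ i ∈ Finset.range n, (1 - a * q ^ i)

noncomputable def qPochInf (a q : ℝ) : ℝ := ∏' i : ℕ, (1 - a * q ^ i)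

/-- Normalized Hahn–Exton q-Bessel function `j_v(z, q²)` (complex argument). -/
noncomputable def jv (v q : ℝ) (z : ℂ) : ℂ :=
  ∑' n : ℕ, (-1 : ℂ) ^ n * (q : ℂ) ^ (n * (n + 1)) * z ^ (2 * n) /
    ((qPoch (q ^ 2) (q ^ 2) n : ℝ) * (qPoch (q ^ (2 * v + 2 : ℝ)) (q ^ 2) n : ℝ) : ℝ)

/-- Normalized Hahn–Exton q-Bessel function `j_v(x, q²)` (real argument). -/
noncomputable def jvR (v q x : ℝ) : ℝ :=
  ∑' n : ℕ, (-1 : ℝ) ^ n * q ^ (n * (n + 1)) * x ^ (2 * n) /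
    (qPoch (q ^ 2) (q ^ 2) n * qPoch (q ^ (2 * v + 2 : ℝ)) (q ^ 2) n)

noncomputable def cqv (q v : ℝ) : ℝ :=
  (1 / (1 - q)) * qPochInf (q ^ (2 * v + 2 : ℝ)) (q ^ 2) / qPochInf (q ^ 2) (q ^ 2)

/-- Jackson q-integral on `[0,a]`. -/
noncomputable def qInt0 (q a : ℝ) (f : ℝ → ℝ) : ℝ :=
  (1 - q) * a * ∑' n : ℕ, q ^ n * f (a * q ^ n)

/-- Jackson q-integral on `[0,∞)`. -/
noncomputable def qIntInf (q : ℝ) (f : ℝ → ℝ) : ℝ :=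
  (1 - q) * ∑' n : ℤ, q ^ n * f (q ^ n)

/-- Complex-valued Jackson q-integral on `[0,a]`. -/
noncomputable def qIntC0 (q a : ℝ) (f : ℝ → ℂ) : ℂ :=
  ((1 - q) * a : ℝ) * ∑' n : ℕ, (q ^ n : ℝ) * f (a * q ^ n)

/-- The operator `T_a^v`. -/
noncomputable def Tav (q v a : ℝ) (u : ℝ → ℝ) (x : ℝ) : ℝ :=
  cqv q v * qInt0 q a (fun t => u t * jvR v q (x * t) * t ^ (2 * v + 1 : ℝ))

/-- The q-Bessel Fourier transform `𝓕_{q,v}`. -/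
noncomputable def Fqv (q v : ℝ) (f : ℝ → ℝ) (x : ℝ) : ℝ :=
  cqv q v * qIntInf q (fun t => f t * jvR v q (x * t) * t ^ (2 * v + 1 : ℝ))

/-- Membership in `L²_{q,v,a}` (functions on `[0,a]_q`). -/
def memL2a (q v a : ℝ) (f : ℝ → ℝ) : Prop :=
  Summable (fun n : ℕ => q ^ n * (f (a * q ^ n)) ^ 2 * (a * q ^ n) ^ (2 * v + 1 : ℝ))

/-- Membership in `L²_{q,2,v}` (even functions on `ℝ_q`, given on `ℝ_q⁺`). -/
def memL2 (q v : ℝ) (f : ℝ → ℝ) : Prop :=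
  Summable (fun n : ℤ => q ^ n * (f (q ^ n)) ^ 2 * ((q : ℝ) ^ n) ^ (2 * v + 1 : ℝ))

/-- Inner product on `L²_{q,2,v}`. -/
noncomputable def qInner (q v : ℝ) (f g : ℝ → ℝ) : ℝ :=
  qIntInf q (fun t => f t * g t * t ^ (2 * v + 1 : ℝ))

/-- The kernel `k(x,y)`. -/
noncomputable def kker (q v a x y : ℝ) : ℝ :=
  cqv q v ^ 2 * qInt0 q a (fun t => jvR v q (x * t) * jvR v q (y * t) * t ^ (2 * v + 1 : ℝ))

/-- The kernel `k_z(y)` with complex `z`. -/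
noncomputable def kkerC (q v a : ℝ) (z : ℂ) (y : ℝ) : ℂ :=
  ((cqv q v ^ 2 : ℝ) : ℂ) *
    qIntC0 q a (fun t => jv v q (z * t) * ((jvR v q (y * t) * t ^ (2 * v + 1 : ℝ) : ℝ) : ℂ))

/-!
With `y = qⁿ` the kernel is `c²` times the Jackson integral of `j_v(yt) j_v(zt) t^{2v+1}` over
`[0, a]`, so the formula is the q-Lommel integral divided by `y² - z²`. Put `b = q^{2v+2}`. The
power series of `j_v` gives the contiguous relation `(1 - b)(j_v(x) - j_v(x/q)) = x² j_{v+1}(x)`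
and the second-order q-difference equation of `j_v`. The first writes the q-Wronskian
`j_v(x/q) j_v(w) - j_v(x) j_v(w/q)` through `j_{v+1}`, the second relates its values at `(x, w)`
and `(qx, qw)`. Together they show that
`L(t) = y² j_{v+1}(yt) j_v(zt/q) - z² j_{v+1}(zt) j_v(yt/q)` satisfies
`L(t) - b L(qt) = (1 - b)(y² - z²) j_v(yt) j_v(zt)`, so the Jackson sum over `t = a q^k`
telescopes to `L(a)`. The tail `b^k L(a q^k)` tends to `0` because `L` is continuous and `b < 1`.
-/

open Filter Topology

lemma HasSum.eq_of_succ {α : Type*} [AddCommGroup α] [TopologicalSpace α]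
    [IsTopologicalAddGroup α] [T2Space α] {f g : ℕ → α} {a b : α} (hf : HasSum f a)
    (hg : HasSum g b) (h0 : f 0 = 0) (hfg : ∀ n, f (n + 1) = g n) : a = b :=
  ((hasSum_nat_add_iff 1).2 (by rwa [Finset.sum_range_one, h0, add_zero])).unique
    (hg.congr_fun hfg)

lemma tsum_sub_succ {α : Type*} [AddCommGroup α] [TopologicalSpace α] [IsTopologicalAddGroup α]
    [T2Space α] {G : ℕ → α} (hG : Summable G) : ∑' k, (G k - G (k + 1)) = G 0 := by
  rw [hG.tsum_sub ((summable_nat_add_iff 1).2 hG), hG.tsum_eq_zero_add, add_sub_cancel_right]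

lemma summable_mul_geometric_of_tendsto {F : Type*} [NormedRing F] [NormOneClass F]
    [NormMulClass F] [CompleteSpace F] {u : ℕ → F} {l : F} (hu : Tendsto u atTop (𝓝 l))
    {r : F} (hr : ‖r‖ < 1) : Summable fun n => u n * r ^ n :=
  (summable_norm_mul_geometric_of_norm_lt_one' (k := 0) hr
    (by simpa using hu.isBigO_one F)).of_norm

lemma one_sub_mul_pow_pos {b r : ℝ} (hb0 : 0 ≤ b) (hb1 : b < 1) (hr0 : 0 ≤ r) (hr1 : r ≤ 1)
    (n : ℕ) : 0 < 1 - b * r ^ n := by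
  nlinarith [mul_le_mul_of_nonneg_left (pow_le_one₀ hr0 hr1 (n := n)) hb0]

lemma qPoch_succ (b r : ℝ) (n : ℕ) : qPoch b r (n + 1) = qPoch b r n * (1 - b * r ^ n) :=
  Finset.prod_range_succ _ _

lemma qPoch_succ' (b r : ℝ) (n : ℕ) : qPoch b r (n + 1) = (1 - b) * qPoch (b * r) r n := by
  rw [qPoch, qPoch, Finset.prod_range_succ', pow_zero, mul_one, mul_comm]
  simp only [pow_succ', mul_assoc]

noncomputable def jvCoeff (v q : ℝ) (n : ℕ) : ℝ :=
  (-1) ^ n * q ^ (n * (n + 1)) / (qPoch (q ^ 2) (q ^ 2) n * qPoch (q ^ (2 * v + 2 : ℝ)) (q ^ 2) n)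

lemma jv_eq_tsum (v q : ℝ) (z : ℂ) :
    jv v q z = ∑' n, (jvCoeff v q n : ℂ) * z ^ (2 * n) := by
  refine tsum_congr fun n => ?_
  simp only [jvCoeff]
  push_cast
  ring

lemma jvR_ofReal (v q x : ℝ) : (jvR v q x : ℂ) = jv v q x := by
  rw [jvR, Complex.ofReal_tsum]
  refine tsum_congr fun n => ?_
  push_cast
  ring

lemma jvCoeff_zero (v q : ℝ) : jvCoeff v q 0 = 1 := by
  simp [jvCoeff, qPoch]

noncomputable def jvCoeffRatio (v q : ℝ) (n : ℕ) : ℝ :=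
  -(q ^ 2 * (q ^ 2) ^ n) / ((1 - q ^ 2 * (q ^ 2) ^ n) * (1 - q ^ (2 * v + 2 : ℝ) * (q ^ 2) ^ n))

lemma jvCoeff_succ (v q : ℝ) (n : ℕ) :
    jvCoeff v q (n + 1) = jvCoeffRatio v q n * jvCoeff v q n := by
  have hexp : (n + 1) * (n + 1 + 1) = n * (n + 1) + 2 * (n + 1) := by ring
  rw [jvCoeff, jvCoeff, jvCoeffRatio, qPoch_succ, qPoch_succ, hexp, pow_add q,
    pow_mul q 2 (n + 1), div_mul_div_comm]
  congr 1 <;> ring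

lemma tendsto_jvCoeffRatio {q : ℝ} (hq : |q| < 1) (v : ℝ) :
    Tendsto (jvCoeffRatio v q) atTop (𝓝 0) := by
  have hq2 : Tendsto (fun n : ℕ => (q ^ 2) ^ n) atTop (𝓝 0) :=
    tendsto_pow_atTop_nhds_zero_of_abs_lt_one (by rw [abs_pow]; nlinarith [abs_nonneg q])
  have hden := ((hq2.const_mul (q ^ 2)).const_sub 1).mul
    ((hq2.const_mul (q ^ (2 * v + 2 : ℝ))).const_sub 1)
  have h := (hq2.const_mul (q ^ 2)).neg.div hden (by norm_num)
  rwa [mul_zero, neg_zero, zero_div] at h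

lemma summable_norm_jv_term {q : ℝ} (hq : |q| < 1) (v : ℝ) (z : ℂ) :
    Summable fun n => ‖(jvCoeff v q n : ℂ) * z ^ (2 * n)‖ := by
  refine summable_of_ratio_norm_eventually_le (r := 1 / 2) (by norm_num) ?_
  have hratio := ((tendsto_jvCoeffRatio hq v).abs.mul_const (‖z‖ ^ 2)).eventually
    (ge_mem_nhds (by simp : |(0 : ℝ)| * ‖z‖ ^ 2 < 1 / 2))
  filter_upwards [hratio] with n hn
  rw [norm_norm, norm_norm, jvCoeff_succ, show 2 * (n + 1) = 2 * n + 2 by ring]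
  simp only [Complex.ofReal_mul, norm_mul, norm_pow, Complex.norm_real, Real.norm_eq_abs,
    pow_add] at hn ⊢
  nlinarith [mul_le_mul_of_nonneg_right hn
    (by positivity : 0 ≤ |jvCoeff v q n| * ‖z‖ ^ (2 * n))]

lemma hasSum_jv {q : ℝ} (hq : |q| < 1) (v : ℝ) (z : ℂ) :
    HasSum (fun n => (jvCoeff v q n : ℂ) * z ^ (2 * n)) (jv v q z) := by
  rw [jv_eq_tsum]
  exact (summable_norm_jv_term hq v z).of_norm.hasSum

lemma continuous_jv {q : ℝ} (hq : |q| < 1) (v : ℝ) : Continuous (jv v q) := by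
  refine continuous_iff_continuousAt.2 fun z => ?_
  have hR : ContinuousOn (fun x : ℂ => ∑' n, (jvCoeff v q n : ℂ) * x ^ (2 * n))
      (Metric.closedBall 0 (‖z‖ + 1)) := by
    refine continuousOn_tsum (fun n => by fun_prop)
      (summable_norm_jv_term hq v ((‖z‖ + 1 : ℝ) : ℂ)) fun n x hx => ?_
    rw [mem_closedBall_zero_iff] at hx
    simp only [norm_mul, norm_pow, Complex.norm_real, Real.norm_eq_abs]
    gcongr
    exact hx.trans (le_abs_self _)
  rw [funext (jv_eq_tsum v q)]
  exact hR.continuousAt (Metric.closedBall_mem_nhds_of_mem (by simp))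

section Relations

variable {q v : ℝ}

lemma rpow_two_mul_add_two_lt_one (hq0 : 0 < q) (hq1 : q < 1) (hv : -1 < v) :
    q ^ (2 * v + 2 : ℝ) < 1 :=
  Real.rpow_lt_one hq0.le hq1 (by linarith)

lemma jvCoeff_add_one (hq0 : 0 < q) (hb : q ^ (2 * v + 2 : ℝ) ≠ 1) (n : ℕ) :
    jvCoeff (v + 1) q n =
      (1 - q ^ (2 * v + 2 : ℝ)) / (1 - q ^ (2 * v + 2 : ℝ) * (q ^ 2) ^ n) * jvCoeff v q n := by
  have hshift : q ^ (2 * (v + 1) + 2 : ℝ) = q ^ (2 * v + 2 : ℝ) * q ^ 2 := by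
    rw [show (2 * (v + 1) + 2 : ℝ) = (2 * v + 2) + (2 : ℕ) by push_cast; ring,
      Real.rpow_add hq0, Real.rpow_natCast]
  have hpoch : qPoch (q ^ (2 * v + 2 : ℝ) * q ^ 2) (q ^ 2) n =
      qPoch (q ^ (2 * v + 2 : ℝ)) (q ^ 2) n * (1 - q ^ (2 * v + 2 : ℝ) * (q ^ 2) ^ n) /
        (1 - q ^ (2 * v + 2 : ℝ)) := by
    rw [eq_div_iff (sub_ne_zero.2 hb.symm), ← qPoch_succ, qPoch_succ', mul_comm]
  rw [jvCoeff, jvCoeff, hshift, hpoch, ← mul_div_assoc, div_div_eq_mul_div, div_mul_div_comm]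
  congr 1 <;> ring

lemma jvCoeff_succ_mul_one_sub (hq0 : 0 < q) (hq1 : q < 1) (hv : -1 < v) (n : ℕ) :
    (1 - q ^ (2 * v + 2 : ℝ)) * (jvCoeff v q (n + 1) * (1 - ((q ^ 2) ^ (n + 1))⁻¹)) =
      jvCoeff (v + 1) q n := by
  have hb1 := rpow_two_mul_add_two_lt_one hq0 hq1 hv
  have hq2 : q ^ 2 < 1 := by nlinarith
  have h1 := one_sub_mul_pow_pos (sq_nonneg q) hq2 (sq_nonneg q) hq2.le n
  have h2 := one_sub_mul_pow_pos (Real.rpow_nonneg hq0.le _) hb1 (sq_nonneg q) hq2.le n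
  have hr0 : (q ^ 2) ^ n ≠ 0 := by positivity
  rw [jvCoeff_succ, jvCoeffRatio, jvCoeff_add_one hq0 hb1.ne, pow_succ' (q ^ 2) n]
  generalize q ^ (2 * v + 2 : ℝ) = b at *
  generalize (q ^ 2) ^ n = r at *
  field_simp [h1.ne', h2.ne']
  ring

lemma jvCoeff_succ_mul_qdiff (hq0 : 0 < q) (hq1 : q < 1) (hv : -1 < v) (n : ℕ) :
    jvCoeff v q (n + 1) * (q ^ 2 * ((q ^ 2) ^ (n + 1))⁻¹ +
      q ^ (2 * v + 2 : ℝ) * (q ^ 2) ^ (n + 1) - (q ^ 2 + q ^ (2 * v + 2 : ℝ))) =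
      -q ^ 2 * jvCoeff v q n := by
  have hb1 := rpow_two_mul_add_two_lt_one hq0 hq1 hv
  have hq2 : q ^ 2 < 1 := by nlinarith
  have h1 := one_sub_mul_pow_pos (sq_nonneg q) hq2 (sq_nonneg q) hq2.le n
  have h2 := one_sub_mul_pow_pos (Real.rpow_nonneg hq0.le _) hb1 (sq_nonneg q) hq2.le n
  have hr0 : (q ^ 2) ^ n ≠ 0 := by positivity
  rw [jvCoeff_succ, jvCoeffRatio, pow_succ' (q ^ 2) n]
  generalize q ^ (2 * v + 2 : ℝ) = b at *
  generalize (q ^ 2) ^ n = r at *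
  field_simp [h1.ne', h2.ne', (mul_comm b r ▸ h2).ne']
  ring

end Relations

section Series

variable {q v : ℝ}

lemma one_sub_mul_jv_sub_jv_div (hq0 : 0 < q) (hq1 : q < 1) (hv : -1 < v) (x : ℂ) :
    (1 - ((q ^ (2 * v + 2 : ℝ) : ℝ) : ℂ)) * (jv v q x - jv v q (x / q)) =
      x ^ 2 * jv (v + 1) q x := by
  have hq : |q| < 1 := abs_lt.2 ⟨by linarith, hq1⟩
  refine (((hasSum_jv hq v x).sub (hasSum_jv hq v (x / q))).mul_left _).eq_of_succ
    ((hasSum_jv hq (v + 1) x).mul_left _) (by simp) fun n => ?_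
  have hc := congrArg (fun r : ℝ => (r : ℂ)) (jvCoeff_succ_mul_one_sub hq0 hq1 hv n)
  push_cast at hc
  linear_combination x ^ (2 * (n + 1)) * hc

lemma jv_qdiff_eq (hq0 : 0 < q) (hq1 : q < 1) (hv : -1 < v) (x : ℂ) :
    q ^ 2 * jv v q (x / q) + ((q ^ (2 * v + 2 : ℝ) : ℝ) : ℂ) * jv v q (q * x)
      - (q ^ 2 + ((q ^ (2 * v + 2 : ℝ) : ℝ) : ℂ)) * jv v q x = -q ^ 2 * x ^ 2 * jv v q x := by
  have hq : |q| < 1 := abs_lt.2 ⟨by linarith, hq1⟩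
  refine ((((hasSum_jv hq v (x / q)).mul_left _).add ((hasSum_jv hq v (q * x)).mul_left _)).sub
    ((hasSum_jv hq v x).mul_left _)).eq_of_succ ((hasSum_jv hq v x).mul_left _)
    (by simp [jvCoeff_zero]) fun n => ?_
  have hc := congrArg (fun r : ℝ => (r : ℂ)) (jvCoeff_succ_mul_qdiff hq0 hq1 hv n)
  push_cast at hc
  linear_combination x ^ (2 * (n + 1)) * hc

end Series

noncomputable def qWronskian (v q : ℝ) (x w : ℂ) : ℂ :=
  jv v q (x / q) * jv v q w - jv v q x * jv v q (w / q)

noncomputable def lommelTerm (v q : ℝ) (y z t : ℂ) : ℂ :=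
  y ^ 2 * jv (v + 1) q (y * t) * jv v q (z * t / q) -
    z ^ 2 * jv (v + 1) q (z * t) * jv v q (y * t / q)

section Wronskian

variable {q v : ℝ}

lemma one_sub_mul_qWronskian (hq0 : 0 < q) (hq1 : q < 1) (hv : -1 < v) (x w : ℂ) :
    (1 - ((q ^ (2 * v + 2 : ℝ) : ℝ) : ℂ)) * qWronskian v q x w =
      w ^ 2 * jv (v + 1) q w * jv v q (x / q) - x ^ 2 * jv (v + 1) q x * jv v q (w / q) := by
  rw [qWronskian]
  linear_combination jv v q (x / q) * one_sub_mul_jv_sub_jv_div hq0 hq1 hv w -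
    jv v q (w / q) * one_sub_mul_jv_sub_jv_div hq0 hq1 hv x

lemma qWronskian_qdiff (hq0 : 0 < q) (hq1 : q < 1) (hv : -1 < v) (x w : ℂ) :
    ((q ^ (2 * v + 2 : ℝ) : ℝ) : ℂ) * qWronskian v q (q * x) (q * w) -
      q ^ 2 * qWronskian v q x w =
      q ^ 2 * (x ^ 2 - w ^ 2) * jv v q x * jv v q w := by
  have hq : (q : ℂ) ≠ 0 := by exact_mod_cast hq0.ne'
  rw [qWronskian, qWronskian, mul_div_cancel_left₀ x hq, mul_div_cancel_left₀ w hq]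
  linear_combination jv v q x * jv_qdiff_eq hq0 hq1 hv w - jv v q w * jv_qdiff_eq hq0 hq1 hv x

lemma lommelTerm_sub_mul_lommelTerm (hq0 : 0 < q) (hq1 : q < 1) (hv : -1 < v) (y z : ℂ)
    {t : ℂ} (ht : t ≠ 0) :
    lommelTerm v q y z t - ((q ^ (2 * v + 2 : ℝ) : ℝ) : ℂ) * lommelTerm v q y z (q * t) =
      (1 - ((q ^ (2 * v + 2 : ℝ) : ℝ) : ℂ)) * (y ^ 2 - z ^ 2) *
        jv v q (y * t) * jv v q (z * t) := by
  have hq : (q : ℂ) ≠ 0 := by exact_mod_cast hq0.ne'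
  have hW := one_sub_mul_qWronskian hq0 hq1 hv (y * t) (z * t)
  have hWq := one_sub_mul_qWronskian hq0 hq1 hv (q * (y * t)) (q * (z * t))
  have hE := qWronskian_qdiff hq0 hq1 hv (y * t) (z * t)
  rw [mul_div_cancel_left₀ _ hq, mul_div_cancel_left₀ _ hq] at hWq
  rw [lommelTerm, lommelTerm, mul_left_comm y, mul_left_comm z, mul_div_cancel_left₀ _ hq,
    mul_div_cancel_left₀ _ hq]
  refine mul_left_cancel₀ (pow_ne_zero 2 (mul_ne_zero hq ht)) ?_
  linear_combination q ^ 2 * hW - ((q ^ (2 * v + 2 : ℝ) : ℝ) : ℂ) * hWq +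
    (1 - ((q ^ (2 * v + 2 : ℝ) : ℝ) : ℂ)) * hE

end Wronskian

section Lommel

variable {q v : ℝ}

theorem mul_tsum_jv_mul_jv (hq0 : 0 < q) (hq1 : q < 1) (hv : -1 < v) {a : ℂ} (ha : a ≠ 0)
    (y z : ℂ) :
    (1 - ((q ^ (2 * v + 2 : ℝ) : ℝ) : ℂ)) * (y ^ 2 - z ^ 2) *
        ∑' k : ℕ, jv v q (y * (a * q ^ k)) * jv v q (z * (a * q ^ k)) *
          ((q ^ (2 * v + 2 : ℝ) : ℝ) : ℂ) ^ k =
      lommelTerm v q y z a := by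
  have hq : |q| < 1 := abs_lt.2 ⟨by linarith, hq1⟩
  have hb : ‖((q ^ (2 * v + 2 : ℝ) : ℝ) : ℂ)‖ < 1 := by
    rw [Complex.norm_real, Real.norm_of_nonneg (Real.rpow_nonneg hq0.le _)]
    exact rpow_two_mul_add_two_lt_one hq0 hq1 hv
  have ht : Tendsto (fun k : ℕ => a * (q : ℂ) ^ k) atTop (𝓝 0) := by
    simpa using (tendsto_pow_atTop_nhds_zero_of_norm_lt_one
      (by rwa [Complex.norm_real, Real.norm_eq_abs] : ‖(q : ℂ)‖ < 1)).const_mul a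
  have hL : Continuous (lommelTerm v q y z) := by
    have := continuous_jv hq v
    have := continuous_jv hq (v + 1)
    unfold lommelTerm
    fun_prop
  have hG : Summable fun k : ℕ =>
      lommelTerm v q y z (a * q ^ k) * ((q ^ (2 * v + 2 : ℝ) : ℝ) : ℂ) ^ k :=
    summable_mul_geometric_of_tendsto ((hL.tendsto 0).comp ht) hb
  rw [← tsum_mul_left]
  refine (tsum_congr fun k => ?_).trans ((tsum_sub_succ hG).trans (by simp))
  have hk : a * (q : ℂ) ^ k ≠ 0 := mul_ne_zero ha (pow_ne_zero _ (by exact_mod_cast hq0.ne'))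
  rw [show a * (q : ℂ) ^ (k + 1) = q * (a * q ^ k) by ring]
  linear_combination (-((q ^ (2 * v + 2 : ℝ) : ℝ) : ℂ) ^ k) *
    lommelTerm_sub_mul_lommelTerm hq0 hq1 hv y z hk

end Lommel

lemma pow_mul_mul_pow_rpow {q : ℝ} (hq0 : 0 < q) {a : ℝ} (ha : 0 ≤ a) (s : ℝ) (k : ℕ) :
    q ^ k * (a * q ^ k) ^ s = a ^ s * (q ^ (s + 1)) ^ k := by
  rw [Real.mul_rpow ha (by positivity), ← Real.rpow_natCast, ← Real.rpow_natCast (q ^ (s + 1)),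
    ← Real.rpow_mul hq0.le, ← Real.rpow_mul hq0.le, mul_left_comm, ← Real.rpow_add hq0]
  ring_nf

lemma qIntC0_mul_rpow {q a : ℝ} (hq0 : 0 < q) (ha : 0 < a) (f : ℝ → ℂ) (s : ℝ) :
    qIntC0 q a (fun t => f t * ((t ^ s : ℝ) : ℂ)) =
      (((1 - q) * a ^ (s + 1) : ℝ) : ℂ) *
        ∑' k : ℕ, f (a * q ^ k) * ((q ^ (s + 1) : ℝ) : ℂ) ^ k := by
  rw [qIntC0, ← tsum_mul_left, ← tsum_mul_left]
  refine tsum_congr fun k => ?_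
  have hk := congrArg (fun r : ℝ => (r : ℂ)) (pow_mul_mul_pow_rpow hq0 ha.le s k)
  rw [Real.rpow_add_one ha.ne']
  push_cast at hk ⊢
  linear_combination (1 - (q : ℂ)) * a * f (a * q ^ k) * hk

theorem mul_qIntC0_jv_mul_jv {q v a : ℝ} (hq0 : 0 < q) (hq1 : q < 1) (hv : -1 < v) (ha : 0 < a)
    (y z : ℂ) :
    (y ^ 2 - z ^ 2) * qIntC0 q a (fun t =>
        jv v q (y * t) * jv v q (z * t) * ((t ^ (2 * v + 1 : ℝ) : ℝ) : ℂ)) =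
      (((1 - q) / (1 - q ^ (2 * v + 2 : ℝ)) * a ^ (2 * v + 2 : ℝ) : ℝ) : ℂ) *
        lommelTerm v q y z a := by
  have hb : (1 - ((q ^ (2 * v + 2 : ℝ) : ℝ) : ℂ)) ≠ 0 := by
    exact_mod_cast (sub_pos.2 (rpow_two_mul_add_two_lt_one hq0 hq1 hv)).ne'
  rw [qIntC0_mul_rpow hq0 ha, show 2 * v + 1 + 1 = 2 * v + 2 by ring,
    ← mul_tsum_jv_mul_jv hq0 hq1 hv (Complex.ofReal_ne_zero.2 ha.ne') y z]
  push_cast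
  generalize ((q ^ (2 * v + 2 : ℝ) : ℝ) : ℂ) = B at hb ⊢
  field_simp

lemma kkerC_eq_qIntC0 (q v a : ℝ) (z : ℂ) (y : ℝ) :
    kkerC q v a z y = ((cqv q v ^ 2 : ℝ) : ℂ) *
      qIntC0 q a (fun t =>
        jv v q (y * t) * jv v q (z * t) * ((t ^ (2 * v + 1 : ℝ) : ℝ) : ℂ)) := by
  rw [kkerC]
  congr 2 with t
  rw [Complex.ofReal_mul, jvR_ofReal, Complex.ofReal_mul]
  ring

/-- the explicit formula for the kernel `k_z(qⁿ)`. -/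
theorem kernel_explicit_formula (q v a : ℝ) (hq0 : 0 < q) (hq1 : q < 1) (hv : -1 < v)
    (ha : 0 < a) (z : ℂ) (n : ℤ) (hz : z ^ 2 ≠ (q : ℂ) ^ (2 * n)) :
    kkerC q v a z ((q : ℝ) ^ n) =
      (((1 - q) * cqv q v ^ 2 / (1 - q ^ (2 * v + 2 : ℝ)) * a ^ (2 * v + 2 : ℝ) : ℝ) : ℂ) *
        (((q : ℂ) ^ (2 * n) * jv (v + 1) q ((a * (q : ℝ) ^ n : ℝ) : ℂ) *
            jv v q (((a / q : ℝ) : ℂ) * z) -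
          z ^ 2 * jv (v + 1) q ((a : ℂ) * z) * (jv v q ((a * (q : ℝ) ^ (n - 1) : ℝ) : ℂ))) /
          ((q : ℂ) ^ (2 * n) - z ^ 2)) := by
  have hq : (q : ℂ) ≠ 0 := by exact_mod_cast hq0.ne'
  have harg : ((a * q ^ n : ℝ) : ℂ) = (q ^ n : ℝ) * a := by push_cast; ring
  have harg_div : ((a / q : ℝ) : ℂ) * z = z * a / q := by push_cast; ring
  have harg_pred : ((a * q ^ (n - 1) : ℝ) : ℂ) = (q ^ n : ℝ) * a / q := by
    push_cast; rw [zpow_sub_one₀ hq]; ring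
  have hy2 : (((q ^ n : ℝ) : ℂ)) ^ 2 = (q : ℂ) ^ (2 * n) := by
    rw [Complex.ofReal_zpow, ← zpow_natCast, ← zpow_mul, mul_comm]
    rfl
  have hL := mul_qIntC0_jv_mul_jv hq0 hq1 hv ha ((q ^ n : ℝ) : ℂ) z
  rw [lommelTerm] at hL
  rw [kkerC_eq_qIntC0, harg, harg_div, harg_pred, mul_comm (a : ℂ) z, ← hy2, mul_div_assoc',
    eq_div_iff (sub_ne_zero.2 (hy2 ▸ hz).symm)]
  push_cast at hL ⊢
  linear_combination (cqv q v : ℂ) ^ 2 * hL
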